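/- Suppose assumptions (A1), (A2), (A3), (A4), (A6), and (A7) hold, and let ε̄₀ > 0 be as given by the smallness lemma (so that every solution with parameter ε < ε̄₀ satisfies sup|ε(u − u'')| < 1/2). Then for every fixed 0 < ε < ε̄₀ there exists a constant m̄ > 0, depending only on ε, γ, α, the constants of (A1), (A2), (A7), and on the C² norm of V, such that every solution (u, m) of Problem 1 with parameter ε satisfies m(x) > m̄ for all x. -/

import Mathlib

/-!
The smallness of `ε (u - u'')` together with the maximum principle bounds `u` and `u''`.
At a minimum point `x₀` of `m` with `m x₀ ≤ 1` the Hamilton–Jacobi equation bounds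
`H (u' x₀)`, hence `|u' x₀|` by the growth condition (A1), hence `|H'' (u' x₀)|`. Since
`m' x₀ = 0` and `m'' x₀ ≥ 0`, the Fokker–Planck equation at `x₀` gives
`m x₀ (1 - H''(u') u'') ≥ 1 - ε (u - u'') > 1/2`, a lower bound on `m x₀` that does not
depend on the solution.
-/

open Set intervalIntegral

noncomputable section

/-- `f : ℝ → ℝ` is ½-Hölder continuous: there is `K ≥ 0` with
`|f x - f y| ≤ K * |x - y| ^ (1/2)` for all `x y`. -/
def IsHolderHalf (f : ℝ → ℝ) : Prop :=
  ∃ K : ℝ, 0 ≤ K ∧ ∀ x y : ℝ, |f x - f y| ≤ K * |x - y| ^ ((1 : ℝ) / 2)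

/-- `f` is a 1-periodic function of class `C²` (a `C²` function on the torus `𝕋`). -/
def MemC2T (f : ℝ → ℝ) : Prop :=
  Function.Periodic f 1 ∧ ContDiff ℝ 2 f

/-- `f ∈ C^{2,1/2}(𝕋)`: 1-periodic, of class `C²`, with ½-Hölder continuous
second derivative. -/
def MemC2HalfT (f : ℝ → ℝ) : Prop :=
  MemC2T f ∧ IsHolderHalf (deriv (deriv f))

/-- `(u, m)` is a solution of Problem 1 with Hamiltonian `H`, potential `V`,
exponent `α` and parameter `ε`: `u, m` are 1-periodic `C²` functions, `m > 0`
everywhere, and the system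
`u - u'' + H(u') + V = m^α + ε (m - m'')`,
`m - m'' - (H'(u') m)' = 1 - ε (u - u'')`
holds pointwise. -/
def SolvesMFG (H V : ℝ → ℝ) (α ε : ℝ) (u m : ℝ → ℝ) : Prop :=
  MemC2T u ∧ MemC2T m ∧ (∀ x, 0 < m x) ∧
  (∀ x : ℝ, u x - deriv (deriv u) x + H (deriv u x) + V x
      = m x ^ α + ε * (m x - deriv (deriv m) x)) ∧
  (∀ x : ℝ, m x - deriv (deriv m) x
      - deriv (fun y => deriv H (deriv u y) * m y) x
      = 1 - ε * (u x - deriv (deriv u) x))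

theorem Function.Periodic.exists_forall_le {α : Type*} [LinearOrder α] [TopologicalSpace α]
    [ClosedIicTopology α] {f : ℝ → α} {c : ℝ} (hp : Function.Periodic f c) (hc : c ≠ 0)
    (hf : Continuous f) : ∃ x₀, ∀ x, f x₀ ≤ f x := by
  obtain ⟨_, ⟨x₀, rfl⟩, hleast⟩ :=
    (hp.compact_of_continuous hc hf).exists_isLeast (range_nonempty f)
  exact ⟨x₀, fun x => hleast ⟨x, rfl⟩⟩

/-- If `f'' x₀ < 0`, the second-derivative test makes `x₀` also a local maximum, so `f` is
locally constant near `x₀`. -/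
theorem IsLocalMin.deriv_deriv_nonneg {f : ℝ → ℝ} {x₀ : ℝ} (hmin : IsLocalMin f x₀)
    (hc : ContinuousAt f x₀) : 0 ≤ deriv (deriv f) x₀ := by
  by_contra! hneg
  have hmax := isLocalMax_of_deriv_deriv_neg hneg hmin.deriv_eq_zero hc
  have hconst : f =ᶠ[nhds x₀] fun _ => f x₀ :=
    (hmin.and hmax).mono fun _ h => le_antisymm h.2 h.1
  have hzero : deriv (deriv f) x₀ = 0 := by
    rw [hconst.deriv.deriv_eq]
    simp
  exact hneg.ne hzero

theorem Function.Periodic.le_of_le_sub_deriv_deriv {u : ℝ → ℝ} {T c : ℝ}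
    (hp : Function.Periodic u T) (hT : T ≠ 0) (hu : ContDiff ℝ 2 u)
    (h : ∀ x, c ≤ u x - deriv (deriv u) x) (x : ℝ) : c ≤ u x := by
  obtain ⟨x₀, hx₀⟩ := hp.exists_forall_le hT hu.continuous
  have hu'' : 0 ≤ deriv (deriv u) x₀ :=
    IsLocalMin.deriv_deriv_nonneg (Filter.Eventually.of_forall hx₀) hu.continuous.continuousAt
  linarith [h x₀, hx₀ x]

theorem Function.Periodic.abs_le_of_abs_sub_deriv_deriv_le {u : ℝ → ℝ} {T c : ℝ}
    (hp : Function.Periodic u T) (hT : T ≠ 0) (hu : ContDiff ℝ 2 u)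
    (h : ∀ x, |u x - deriv (deriv u) x| ≤ c) (x : ℝ) : |u x| ≤ c := by
  have hlow := hp.le_of_le_sub_deriv_deriv hT hu (fun y => (abs_le.1 (h y)).1) x
  have hup : -c ≤ -u x := by
    have hp' : Function.Periodic (-u) T := fun y => congrArg Neg.neg (hp y)
    refine hp'.le_of_le_sub_deriv_deriv hT hu.neg (fun y => ?_) x
    simp only [Pi.neg_apply, deriv.neg', deriv.fun_neg']
    linarith [(abs_le.1 (h y)).2]
  exact abs_le.2 ⟨hlow, by linarith⟩

theorem Function.Periodic.abs_deriv_deriv_le_of_abs_sub_deriv_deriv_le {u : ℝ → ℝ} {T c : ℝ}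
    (hp : Function.Periodic u T) (hT : T ≠ 0) (hu : ContDiff ℝ 2 u)
    (h : ∀ x, |u x - deriv (deriv u) x| ≤ c) (x : ℝ) : |deriv (deriv u) x| ≤ 2 * c := by
  calc |deriv (deriv u) x| = |u x - (u x - deriv (deriv u) x)| := by ring_nf
    _ ≤ |u x| + |u x - deriv (deriv u) x| := abs_sub _ _
    _ ≤ 2 * c := by linarith [hp.abs_le_of_abs_sub_deriv_deriv_le hT hu h x, h x]

theorem deriv_comp_mul_of_deriv_eq_zero {g v m : ℝ → ℝ} {x : ℝ}
    (hg : DifferentiableAt ℝ g (v x)) (hv : DifferentiableAt ℝ v x)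
    (hm : DifferentiableAt ℝ m x) (hm' : deriv m x = 0) :
    deriv (fun y => g (v y) * m y) x = deriv g (v x) * deriv v x * m x := by
  have hderiv : HasDerivAt (fun y => g (v y) * m y)
      (deriv g (v x) * deriv v x * m x + g (v x) * deriv m x) x :=
    (hg.hasDerivAt.comp x hv.hasDerivAt).mul hm.hasDerivAt
  rw [hderiv.deriv, hm']
  ring

namespace SolvesMFG

variable {H V : ℝ → ℝ} {α ε : ℝ} {u m : ℝ → ℝ}

theorem hamiltonian_le_of_isLocalMin (hsol : SolvesMFG H V α ε u m) (hα : 0 ≤ α)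
    (hε : 0 ≤ ε) (hε1 : ε ≤ 1) {x₀ : ℝ} (hmin : IsLocalMin m x₀) (hm1 : m x₀ ≤ 1) :
    H (deriv u x₀) ≤ 2 - V x₀ - (u x₀ - deriv (deriv u) x₀) := by
  obtain ⟨-, hm, hmpos, hHJB, -⟩ := hsol
  have hm'' := hmin.deriv_deriv_nonneg hm.2.continuous.continuousAt
  have hmα : m x₀ ^ α ≤ 1 := Real.rpow_le_one (hmpos x₀).le hm1 hα
  have hεm : ε * (m x₀ - deriv (deriv m) x₀) ≤ 1 :=
    calc ε * (m x₀ - deriv (deriv m) x₀) ≤ ε * m x₀ := by gcongr; linarith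
      _ ≤ 1 * 1 := mul_le_mul hε1 hm1 (hmpos x₀).le zero_le_one
      _ = 1 := one_mul 1
  linarith [hHJB x₀]

theorem half_lt_mul_of_isLocalMin (hsol : SolvesMFG H V α ε u m) {x₀ : ℝ}
    (hH : DifferentiableAt ℝ (deriv H) (deriv u x₀)) (hmin : IsLocalMin m x₀)
    (hsmall : ε * (u x₀ - deriv (deriv u) x₀) < 1 / 2) :
    1 / 2 < m x₀ * (1 - deriv (deriv H) (deriv u x₀) * deriv (deriv u) x₀) := by
  obtain ⟨hu, hm, -, -, hFP⟩ := hsol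
  have hm'' := hmin.deriv_deriv_nonneg hm.2.continuous.continuousAt
  have hflux := deriv_comp_mul_of_deriv_eq_zero hH
    hu.2.differentiable_deriv_two.differentiableAt
    (hm.2.differentiable (by norm_num)).differentiableAt hmin.deriv_eq_zero
  linarith [hFP x₀]

theorem min_lt_of_bounds (hsol : SolvesMFG H V α ε u m) (hα : 0 ≤ α) (hε : 0 < ε) (hε1 : ε ≤ 1)
    (hH : Differentiable ℝ (deriv H))
    (hsmall : ∀ x, |ε * (u x - deriv (deriv u) x)| < 1 / 2) {Kv R Mh : ℝ}
    (hV : ∀ x, |V x| ≤ Kv) (hsublevel : ∀ p, H p ≤ 2 + Kv + 1 / (2 * ε) → |p| ≤ R)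
    (hH'' : ∀ p, |p| ≤ R → |deriv (deriv H) p| ≤ Mh) (x : ℝ) :
    min (1 / (2 * (1 + Mh / ε))) 1 < m x := by
  have hsub : ∀ y, |u y - deriv (deriv u) y| ≤ 1 / (2 * ε) := fun y => by
    have := hsmall y
    rw [abs_mul, abs_of_pos hε] at this
    rw [le_div_iff₀ (by positivity)]
    linarith
  obtain ⟨x₀, hx₀⟩ := hsol.2.1.1.exists_forall_le one_ne_zero hsol.2.1.2.continuous
  have hmin : IsLocalMin m x₀ := Filter.Eventually.of_forall hx₀
  refine lt_of_lt_of_le ?_ (hx₀ x)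
  obtain hm1 | hm1 := lt_or_ge 1 (m x₀)
  · exact (min_le_right _ _).trans_lt hm1
  refine (min_le_left _ _).trans_lt ?_
  have hR : |deriv u x₀| ≤ R := by
    refine hsublevel _ ((hsol.hamiltonian_le_of_isLocalMin hα hε.le hε1 hmin hm1).trans ?_)
    linarith [(abs_le.1 (hV x₀)).1, (abs_le.1 (hsub x₀)).1]
  have hu'' : |deriv (deriv u) x₀| ≤ 1 / ε :=
    calc _ ≤ 2 * (1 / (2 * ε)) :=
          hsol.1.1.abs_deriv_deriv_le_of_abs_sub_deriv_deriv_le one_ne_zero hsol.1.2 hsub x₀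
      _ = 1 / ε := by field_simp
  have hMh : 0 ≤ Mh := (abs_nonneg _).trans (hH'' _ hR)
  have hprod : -(Mh / ε) ≤ deriv (deriv H) (deriv u x₀) * deriv (deriv u) x₀ := by
    have := mul_le_mul (hH'' _ hR) hu'' (abs_nonneg _) hMh
    rw [← abs_mul, mul_one_div] at this
    exact neg_le_of_abs_le this
  have hhalf := hsol.half_lt_mul_of_isLocalMin (hH _) hmin (abs_lt.1 (hsmall x₀)).2
  have hmul : m x₀ * (1 - deriv (deriv H) (deriv u x₀) * deriv (deriv u) x₀)
      ≤ m x₀ * (1 + Mh / ε) :=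
    mul_le_mul_of_nonneg_left (by linarith) (hsol.2.2.1 x₀).le
  rw [div_lt_iff₀ (by positivity)]
  linarith

end SolvesMFG

theorem lower_bound_on_m
    (α : ℝ) (hα : 0 < α)
    (H V : ℝ → ℝ) (hH : ContDiff ℝ 2 H)
    (hVcont : Continuous V) (hVper : Function.Periodic V 1)
    (γ C1 C2 C3 : ℝ) (hγ : 1 < γ) (hC2 : 0 < C2)
    (hA1 : ∀ p : ℝ, -C1 + C2 * |p| ^ γ ≤ H p ∧ H p ≤ C1 + C3 * |p| ^ γ)
    (εbar₀ : ℝ)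
    (hsmall : ∀ ε : ℝ, 0 < ε → ε ≤ 1 → ε < εbar₀ →
      ∀ u m : ℝ → ℝ, SolvesMFG H V α ε u m →
        ∀ x : ℝ, |ε * (u x - deriv (deriv u) x)| < 1 / 2) :
    ∀ ε : ℝ, 0 < ε → ε ≤ 1 → ε < εbar₀ →
      ∃ mbar > 0, ∀ u m : ℝ → ℝ, SolvesMFG H V α ε u m →
        ∀ x : ℝ, mbar < m x := by
  intro ε hε hε1 hεbar₀
  obtain ⟨Kv, hKv⟩ := (hVper.isBounded_of_continuous one_ne_zero hVcont).exists_norm_le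
  set D := 2 + Kv + 1 / (2 * ε)
  set R := ((C1 + D) / C2) ^ γ⁻¹
  have hsublevel : ∀ p, H p ≤ D → |p| ≤ R := fun p hp => by
    have hpγ : |p| ^ γ ≤ (C1 + D) / C2 := by
      rw [le_div_iff₀ hC2]
      linarith [(hA1 p).1]
    exact (Real.le_rpow_inv_iff_of_pos (abs_nonneg p)
      ((Real.rpow_nonneg (abs_nonneg p) γ).trans hpγ) (by linarith)).2 hpγ
  obtain ⟨Mh, hMh, hH''⟩ := ((isCompact_Icc (a := -R) (b := R)).image_of_continuousOn
    (ContDiff.deriv' (n := 1) hH).continuous_deriv_one.continuousOn).isBounded.exists_pos_norm_le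
  refine ⟨min (1 / (2 * (1 + Mh / ε))) 1, by positivity, fun u m hsol x => ?_⟩
  exact hsol.min_lt_of_bounds hα.le hε hε1 hH.differentiable_deriv_two (hsmall ε hε hε1 hεbar₀ u m hsol)
    (fun y => hKv _ ⟨y, rfl⟩) hsublevel (fun p hp => hH'' _ ⟨p, abs_le.1 hp, rfl⟩) x
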